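/- (Restricted strong convexity transfers under offset reweighting.) Let ℓ_N(γ; a) = −N^{−1} Σ_i [R_i x_i^T γ − log(1 + a·exp(x_i^T γ))] for a ∈ (0,1], and define δℓ(Δ; a; γ) = ℓ_N(γ+Δ; a) − ℓ_N(γ; a) − Δ^T ∇_γ ℓ_N(γ; a). Then for all Δ and all a ∈ (0,1], δℓ(Δ; a; γ₀) ≥ a · δℓ(Δ; 1; γ₀). Consequently, if δℓ(Δ; 1; γ₀) ≥ κ‖Δ‖₂² for all Δ in a set A, then δℓ(Δ; a; γ₀) ≥ aκ‖Δ‖₂² on A. -/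

import Mathlib

/-! With `φ_a t = log (1 + a eᵗ)` we have `φ_a' t = σ (t + log a)`, so `δℓ(Δ; a; γ)` is the average
over `i` of the Bregman divergences `B_a (xᵢᵀγ) (xᵢᵀΔ)`, `B_a u v = φ_a (u + v) - φ_a u - v φ_a' u`
(the terms in `Rᵢ` cancel). For `0 < a ≤ 1`, `φ_a'' t = σ' (t + log a) ≥ a σ' t = a φ_1'' t`, so
`φ_a - a φ_1` is convex, and its tangent-line inequality at `u` is exactly `a B_1 u v ≤ B_a u v`. -/

open Finset

/-- The logistic function `g(u) = exp(u)/(1+exp(u))`. -/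
noncomputable def logistic (u : ℝ) : ℝ := Real.exp u / (1 + Real.exp u)

/-- The offset logistic negative log-likelihood
`ℓ_N(γ; a) = −N⁻¹ Σ_i [R_i x_iᵀγ − log(1 + a·exp(x_iᵀγ))]`. -/
noncomputable def ellN {N d : ℕ} (R : Fin N → ℝ) (x : Fin N → Fin d → ℝ)
    (γ : Fin d → ℝ) (a : ℝ) : ℝ :=
  -(N : ℝ)⁻¹ * ∑ i, (R i * (∑ j, x i j * γ j) -
    Real.log (1 + a * Real.exp (∑ j, x i j * γ j)))

/-- The gradient `∇_γ ℓ_N(γ; a) = −N⁻¹ Σ_i (R_i − g(x_iᵀγ + log a)) x_i`. -/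
noncomputable def gradEllN {N d : ℕ} (R : Fin N → ℝ) (x : Fin N → Fin d → ℝ)
    (γ : Fin d → ℝ) (a : ℝ) : Fin d → ℝ := fun j =>
  -(N : ℝ)⁻¹ * ∑ i, (R i - logistic ((∑ k, x i k * γ k) + Real.log a)) * x i j

/-- The first-order Taylor remainder
`δℓ(Δ; a; γ) = ℓ_N(γ+Δ; a) − ℓ_N(γ; a) − Δᵀ ∇_γ ℓ_N(γ; a)`. -/
noncomputable def deltaEll {N d : ℕ} (R : Fin N → ℝ) (x : Fin N → Fin d → ℝ)
    (Δ : Fin d → ℝ) (a : ℝ) (γ : Fin d → ℝ) : ℝ :=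
  ellN R x (γ + Δ) a - ellN R x γ a - ∑ j, Δ j * gradEllN R x γ a j

open Real

lemma logistic_eq_sigmoid : logistic = sigmoid := by
  funext u
  rw [logistic, sigmoid_def, exp_neg]
  field_simp
  ring

lemma hasDerivAt_log_one_add_exp (t : ℝ) :
    HasDerivAt (fun t => log (1 + exp t)) (sigmoid t) t := by
  rw [← logistic_eq_sigmoid]
  exact ((hasDerivAt_exp t).const_add 1).log (by positivity)

lemma hasDerivAt_log_one_add_mul_exp {a : ℝ} (ha : 0 < a) (t : ℝ) :
    HasDerivAt (fun t => log (1 + a * exp t)) (sigmoid (t + log a)) t := by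
  have hfun : (fun t => log (1 + a * exp t)) = fun t => log (1 + exp (t + log a)) := by
    funext t
    rw [exp_add, exp_log ha, mul_comm]
  rw [hfun]
  exact (hasDerivAt_log_one_add_exp (t + log a)).comp_add_const t (log a)

lemma sigmoid_mul_one_sub_sigmoid (u : ℝ) :
    sigmoid u * (1 - sigmoid u) = exp u / (1 + exp u) ^ 2 := by
  rw [← logistic_eq_sigmoid, logistic]
  field_simp
  ring

lemma mul_deriv_sigmoid_le_deriv_sigmoid_add_log {a : ℝ} (ha : 0 < a) (ha1 : a ≤ 1) (u : ℝ) :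
    a * (sigmoid u * (1 - sigmoid u)) ≤ sigmoid (u + log a) * (1 - sigmoid (u + log a)) := by
  rw [sigmoid_mul_one_sub_sigmoid, sigmoid_mul_one_sub_sigmoid, exp_add, exp_log ha,
    mul_comm (exp u) a, mul_div_assoc']
  apply div_le_div_of_nonneg_left (by positivity) (by positivity)
  have : a * exp u ≤ exp u := mul_le_of_le_one_left (exp_pos u).le ha1
  gcongr

lemma ConvexOn.add_mul_le_of_hasDerivAt {S : Set ℝ} {f : ℝ → ℝ} {f' x y : ℝ}
    (hf : ConvexOn ℝ S f) (hx : x ∈ S) (hy : y ∈ S) (hd : HasDerivAt f f' x) :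
    f x + (y - x) * f' ≤ f y := by
  rcases lt_trichotomy x y with hxy | rfl | hxy
  · have h := hf.le_slope_of_hasDerivAt hx hy hxy hd
    rw [slope_def_field, le_div_iff₀ (sub_pos.2 hxy)] at h
    linarith
  · simp
  · have h := hf.slope_le_of_hasDerivAt hy hx hxy hd
    rw [slope_def_field, div_le_iff₀ (sub_pos.2 hxy)] at h
    linarith

lemma hasDerivAt_log_one_add_mul_exp_sub {a : ℝ} (ha : 0 < a) (t : ℝ) :
    HasDerivAt (fun t => log (1 + a * exp t) - a * log (1 + exp t))
      (sigmoid (t + log a) - a * sigmoid t) t :=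
  (hasDerivAt_log_one_add_mul_exp ha t).sub ((hasDerivAt_log_one_add_exp t).const_mul a)

lemma convexOn_log_one_add_mul_exp_sub {a : ℝ} (ha : 0 < a) (ha1 : a ≤ 1) :
    ConvexOn ℝ Set.univ (fun t => log (1 + a * exp t) - a * log (1 + exp t)) := by
  refine convexOn_of_hasDerivWithinAt2_nonneg convex_univ
    (fun t _ => (hasDerivAt_log_one_add_mul_exp_sub ha t).continuousAt.continuousWithinAt)
    (fun t _ => (hasDerivAt_log_one_add_mul_exp_sub ha t).hasDerivWithinAt)
    (fun t _ => (((hasDerivAt_sigmoid (t + log a)).comp_add_const t (log a)).sub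
      ((hasDerivAt_sigmoid t).const_mul a)).hasDerivWithinAt) ?_
  intro t _
  exact sub_nonneg.2 (mul_deriv_sigmoid_le_deriv_sigmoid_add_log ha ha1 t)

noncomputable def offsetBregman (a u v : ℝ) : ℝ :=
  log (1 + a * exp (u + v)) - log (1 + a * exp u) - v * sigmoid (u + log a)

lemma mul_offsetBregman_one_le {a : ℝ} (ha : 0 < a) (ha1 : a ≤ 1) (u v : ℝ) :
    a * offsetBregman 1 u v ≤ offsetBregman a u v := by
  have h := (convexOn_log_one_add_mul_exp_sub ha ha1).add_mul_le_of_hasDerivAt (Set.mem_univ u)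
    (Set.mem_univ (u + v)) (hasDerivAt_log_one_add_mul_exp_sub ha u)
  simp only [offsetBregman, one_mul, log_one, add_zero, add_sub_cancel_left] at h ⊢
  linarith

lemma deltaEll_eq_sum_offsetBregman {N d : ℕ} (R : Fin N → ℝ) (x : Fin N → Fin d → ℝ)
    (Δ : Fin d → ℝ) (a : ℝ) (γ : Fin d → ℝ) :
    deltaEll R x Δ a γ =
      (N : ℝ)⁻¹ * ∑ i, offsetBregman a (∑ j, x i j * γ j) (∑ j, x i j * Δ j) := by
  have hlin : ∀ i, ∑ j, x i j * (γ + Δ) j = (∑ j, x i j * γ j) + ∑ j, x i j * Δ j := fun i => by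
    simp only [Pi.add_apply, mul_add, sum_add_distrib]
  have hgrad : ∑ j, Δ j * gradEllN R x γ a j = -(N : ℝ)⁻¹ *
      ∑ i, (R i - sigmoid ((∑ k, x i k * γ k) + log a)) * ∑ j, x i j * Δ j := by
    simp only [gradEllN, logistic_eq_sigmoid, mul_sum]
    rw [sum_comm]
    refine sum_congr rfl fun i _ => sum_congr rfl fun j _ => ?_
    ring
  rw [deltaEll, ellN, ellN, hgrad, ← mul_sub, ← mul_sub, ← sum_sub_distrib,
    ← sum_sub_distrib, neg_mul, ← mul_neg, ← sum_neg_distrib]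
  refine congrArg _ (sum_congr rfl fun i _ => ?_)
  rw [hlin, offsetBregman]
  ring

lemma mul_deltaEll_one_le {N d : ℕ} (R : Fin N → ℝ) (x : Fin N → Fin d → ℝ)
    (Δ : Fin d → ℝ) (γ : Fin d → ℝ) {a : ℝ} (ha : 0 < a) (ha1 : a ≤ 1) :
    a * deltaEll R x Δ 1 γ ≤ deltaEll R x Δ a γ := by
  simp only [deltaEll_eq_sum_offsetBregman, mul_sum, mul_left_comm a]
  gcongr with i
  exact mul_offsetBregman_one_le ha ha1 _ _

/-- Restricted strong convexity transfers under offset reweighting: for all `Δ` and all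
`a ∈ (0,1]`, `δℓ(Δ; a; γ₀) ≥ a·δℓ(Δ; 1; γ₀)`; consequently the RSC property with parameter `κ`
on a set `A` for `a = 1` implies the RSC property with parameter `a·κ` on `A`. -/
theorem deltaEll_offset_RSC_transfer {N d : ℕ} (R : Fin N → ℝ) (x : Fin N → Fin d → ℝ)
    (γ₀ : Fin d → ℝ) :
    (∀ a : ℝ, a ∈ Set.Ioc (0 : ℝ) 1 → ∀ Δ : Fin d → ℝ,
      a * deltaEll R x Δ 1 γ₀ ≤ deltaEll R x Δ a γ₀) ∧
    (∀ a : ℝ, a ∈ Set.Ioc (0 : ℝ) 1 → ∀ (A : Set (Fin d → ℝ)) (κ : ℝ),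
      (∀ Δ ∈ A, κ * ∑ j, (Δ j) ^ 2 ≤ deltaEll R x Δ 1 γ₀) →
      ∀ Δ ∈ A, a * κ * ∑ j, (Δ j) ^ 2 ≤ deltaEll R x Δ a γ₀) := by
  refine ⟨fun a ha Δ => mul_deltaEll_one_le R x Δ γ₀ ha.1 ha.2, ?_⟩
  rintro a ⟨ha, ha1⟩ A κ hRSC Δ hΔ
  calc a * κ * ∑ j, (Δ j) ^ 2 = a * (κ * ∑ j, (Δ j) ^ 2) := mul_assoc _ _ _
    _ ≤ a * deltaEll R x Δ 1 γ₀ := mul_le_mul_of_nonneg_left (hRSC Δ hΔ) ha.le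
    _ ≤ deltaEll R x Δ a γ₀ := mul_deltaEll_one_le R x Δ γ₀ ha ha1
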